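/- arXiv:1407.4663 — 2 statements merged into one kernel-verified Lean document; each statement's English description precedes it below -/
import Mathlib

section
/- For every ε > 0 and every fixed positive integer k, there is a constant C = C(ε, k) such that every connected graph G on n vertices with minimum degree at least εn satisfies rx_k(G) ≤ C. -/
open SimpleGraph

/-- An edge-coloring `c` is a `k`-rainbow coloring of `G` if every set of `k` vertices
is connected by a rainbow tree (here: a connected subgraph whose edges receive
pairwise distinct colors). -/
def IsKRainbowColoring {V : Type*} (G : SimpleGraph V) (k : ℕ) (c : Sym2 V → ℕ) : Prop :=
  ∀ S : Finset V, S.card = k →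
    ∃ T : G.Subgraph, T.Connected ∧ ↑S ⊆ T.verts ∧ Set.InjOn c T.edgeSet

/-- The `k`-rainbow index: minimum number of colors in a `k`-rainbow coloring. -/
noncomputable def rxk {V : Type*} (G : SimpleGraph V) (k : ℕ) : ℕ :=
  sInf {m | ∃ c : Sym2 V → ℕ, (∀ e ∈ G.edgeSet, c e < m) ∧ IsKRainbowColoring G k c}

/-!
Put `q = ⌈1/ε⌉`, so that `n ≤ q · deg v` for every vertex. On a shortest path the closed
neighbourhoods of every third vertex are disjoint, so the diameter is less than `3q`. A greedy
choice gives a set `R` of at most `2q` vertices such that every vertex has fewer than `n/(2q)`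
neighbours outside `N(R)`; joining `R` to a root by shortest paths gives a connected core `H` of
bounded size, and every vertex `s` outside `H` then has roughly `n/(2q)` neighbours `x ∉ H` that
are adjacent to `H`.

Label the vertices by `Fin p`, each label used at most `n/p + 1` times, and colour an edge by the
unordered pair of the names of its ends, where a vertex of `H` is named by itself and any other
vertex by its label. The core is rainbow. The vertices of a `k`-set are hung on the core one at a
time by paths `s – x – t` with `t ∈ H`, choosing `x` with a label not yet used outside `H`: the
two new colours contain this fresh label and so are new. Only `O(k)` labels are ever used, which
forbids `O(k n / p)` choices of `x`; for `p` of order `qk` some `x` is left. For small `n`, just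
give every edge its own colour.
-/

open Finset

theorem Fintype.exists_fiber_card_le (V : Type*) [Fintype V] (p : ℕ) [NeZero p] :
    ∃ lab : V → Fin p, ∀ i, #{v | lab v = i} ≤ Fintype.card V / p + 1 := by
  classical
  set e := Fintype.equivFin V
  refine ⟨fun v => Fin.ofNat p (e v), fun i => ?_⟩
  rw [← Finset.card_range (Fintype.card V / p + 1)]
  refine card_le_card_of_injOn (fun v => (e v : ℕ) / p) (fun v _ => ?_) fun v hv w hw hvw => ?_
  · simpa [Nat.lt_succ_iff] using Nat.div_le_div_right (e v).isLt.le
  · simp only [coe_filter, mem_univ, true_and, Fin.ext_iff, Fin.val_ofNat] at hv hw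
    apply e.injective
    rw [Fin.ext_iff, ← Nat.div_add_mod (e v) p, ← Nat.div_add_mod (e w) p, hv, hw]
    simp only at hvw
    rw [hvw]

namespace SimpleGraph

open Classical

variable {V : Type*} {G : SimpleGraph V}

theorem rxk_le_card {α : Type*} [Fintype α] {k : ℕ} (c : Sym2 V → α)
    (hc : ∀ S : Finset V, S.card = k →
      ∃ T : G.Subgraph, T.Connected ∧ ↑S ⊆ T.verts ∧ Set.InjOn c T.edgeSet) :
    rxk G k ≤ Fintype.card α := by
  refine Nat.sInf_le ⟨fun e => Fintype.equivFin α (c e), fun e _ => Fin.isLt _, fun S hS => ?_⟩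
  obtain ⟨T, hT, hST, hinj⟩ := hc S hS
  exact ⟨T, hT, hST, (Fin.val_injective.comp (Fintype.equivFin α).injective).comp_injOn hinj⟩

theorem rxk_le_choose [Fintype V] (hconn : G.Connected) (k : ℕ) :
    rxk G k ≤ (Fintype.card V + 1).choose 2 := by
  rw [← Sym2.card]
  refine rxk_le_card id fun S _ => ⟨⊤, ?_, by simp, Function.injective_id.injOn⟩
  rw [Subgraph.connected_iff']
  exact Subgraph.topIso.connected_iff.mpr hconn

theorem Walk.ncard_verts_toSubgraph_le {u v : V} (w : G.Walk u v) :
    w.toSubgraph.verts.ncard ≤ w.length + 1 := by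
  have : w.toSubgraph.verts = ↑w.support.toFinset := by ext; simp
  rw [this, Set.ncard_coe_finset, ← w.length_support]
  exact w.support.toFinset_card_le

theorem exists_connected_subgraph_of_dist_le (hconn : G.Connected) (r₀ : V) (R : Finset V)
    {ℓ : ℕ} (hR : ∀ r ∈ R, G.dist r r₀ ≤ ℓ) :
    ∃ H : G.Subgraph, H.Connected ∧ r₀ ∈ H.verts ∧ ↑R ⊆ H.verts ∧
      H.verts.ncard ≤ 1 + R.card * (ℓ + 1) := by
  induction R using Finset.induction_on with
  | empty => exact ⟨G.singletonSubgraph r₀, Subgraph.singletonSubgraph_connected, by simp,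
      by simp, by simp⟩
  | insert r R hr ih =>
    obtain ⟨H, hH, h₀, hRH, hcard⟩ := ih fun r' hr' => hR r' (Finset.mem_insert_of_mem hr')
    obtain ⟨w, hw⟩ := hconn.exists_walk_length_eq_dist r r₀
    refine ⟨H ⊔ w.toSubgraph, Subgraph.connected_sup hH.preconnected
      w.toSubgraph_connected.preconnected ⟨r₀, h₀, w.end_mem_verts_toSubgraph⟩, Or.inl h₀,
      ?_, ?_⟩
    · rw [Finset.coe_insert, Subgraph.verts_sup]
      exact Set.insert_subset (Or.inr w.start_mem_verts_toSubgraph)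
        (hRH.trans Set.subset_union_left)
    · have hwℓ : w.length ≤ ℓ := hw ▸ hR r (Finset.mem_insert_self r R)
      rw [Subgraph.verts_sup, Finset.card_insert_of_notMem hr]
      calc (H.verts ∪ w.toSubgraph.verts).ncard ≤ H.verts.ncard + w.toSubgraph.verts.ncard :=
            Set.ncard_union_le _ _
        _ ≤ 1 + R.card * (ℓ + 1) + (ℓ + 1) :=
            add_le_add hcard (w.ncard_verts_toSubgraph_le.trans (by omega))
        _ = 1 + (R.card + 1) * (ℓ + 1) := by ring

section Fintype

variable [Fintype V]

theorem Connected.dist_div_three_add_one_mul_le (hconn : G.Connected) {δ : ℕ}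
    (hδ : ∀ v, δ ≤ G.degree v) (u v : V) :
    (G.dist u v / 3 + 1) * (δ + 1) ≤ Fintype.card V := by
  obtain ⟨w, hw⟩ := hconn.exists_walk_length_eq_dist u v
  set d := G.dist u v
  let a : ℕ → V := fun i => w.getVert (3 * i)
  let ball : ℕ → Finset V := fun i => insert (a i) (G.neighborFinset (a i))
  have dist_le_one {x y : V} (hy : y ∈ insert x (G.neighborFinset x)) : G.dist x y ≤ 1 := by
    rcases Finset.mem_insert.mp hy with rfl | hy
    · simp
    · exact (dist_eq_one_iff_adj.mpr ((G.mem_neighborFinset _ _).mp hy)).le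
  have hdisj : ((range (d / 3 + 1) : Finset ℕ) : Set ℕ).PairwiseDisjoint ball := by
    suffices key : ∀ i j, i < j → j < d / 3 + 1 → Disjoint (ball i) (ball j) by
      intro i hi j hj hij
      rcases lt_or_gt_of_ne hij with h | h
      · exact key i j h (by simpa using hj)
      · exact (key j i h (by simpa using hi)).symm
    intro i j hij hj
    rw [Finset.disjoint_left]
    intro y hyi hyj
    have hu : G.dist u (a i) ≤ 3 * i := (dist_le (w.take (3 * i))).trans (by simp)
    have hv : G.dist (a j) v ≤ d - 3 * j := (dist_le (w.drop (3 * j))).trans (by simp [hw])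
    have hij' : G.dist (a i) (a j) ≤ 2 :=
      hconn.dist_triangle.trans (add_le_add (dist_le_one hyi) (dist_comm ▸ dist_le_one hyj))
    -- otherwise the detour through `y` would shortcut the shortest walk `w`
    have hd : d ≤ G.dist u (a i) + (G.dist (a i) (a j) + G.dist (a j) v) :=
      hconn.dist_triangle.trans (Nat.add_le_add_left hconn.dist_triangle _)
    omega
  have hball : ∀ i, δ + 1 ≤ (ball i).card := fun i => by
    rw [Finset.card_insert_of_notMem (G.notMem_neighborFinset_self _),
      card_neighborFinset_eq_degree]
    exact Nat.succ_le_succ (hδ _)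
  calc (d / 3 + 1) * (δ + 1) = ∑ _i ∈ range (d / 3 + 1), (δ + 1) := by simp
    _ ≤ ∑ i ∈ range (d / 3 + 1), (ball i).card := Finset.sum_le_sum fun i _ => hball i
    _ = ((range (d / 3 + 1)).biUnion ball).card := (Finset.card_biUnion hdisj).symm
    _ ≤ Fintype.card V := Finset.card_le_univ _

theorem Connected.dist_lt_three_mul (hconn : G.Connected) {q : ℕ}
    (hq : ∀ v, Fintype.card V ≤ q * G.degree v) (u v : V) : G.dist u v < 3 * q := by
  have : Nonempty V := hconn.nonempty
  obtain ⟨w, hw⟩ := G.exists_minimal_degree_vertex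
  have h := hconn.dist_div_three_add_one_mul_le G.minDegree_le_degree u v
  have := hq w
  rw [← hw] at this
  have : G.dist u v / 3 + 1 < q := by
    by_contra! h'
    nlinarith [Nat.mul_le_mul_right (G.minDegree + 1) h', Fintype.card_pos (α := V)]
  omega

/-- Take `R` maximising `#N(R)` subject to `#R * n ≤ c * #N(R)`: a vertex violating the bound
could be added to `R`. -/
theorem exists_card_le_forall_mul_card_neighborFinset_sdiff_lt (c : ℕ) :
    ∃ R : Finset V, R.card ≤ c ∧
      ∀ s, c * #(G.neighborFinset s \ R.biUnion (fun r => G.neighborFinset r)) <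
        Fintype.card V := by
  set n := Fintype.card V
  rcases Nat.eq_zero_or_pos n with hn | hn
  · have : IsEmpty V := Fintype.card_eq_zero_iff.mp hn
    exact ⟨∅, by simp, fun s => isEmptyElim s⟩
  let N : Finset V → Finset V := fun R => R.biUnion (fun r => G.neighborFinset r)
  obtain ⟨R, hR, hmax⟩ := ((univ : Finset V).powerset.filter
    (fun R => R.card * n ≤ c * (N R).card)).exists_max_image (fun R => (N R).card)
    ⟨∅, by simp⟩
  have hRn : R.card * n ≤ c * (N R).card := (Finset.mem_filter.mp hR).2
  refine ⟨R, Nat.le_of_mul_le_mul_right (hRn.trans (Nat.mul_le_mul_left c (card_le_univ _))) hn,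
    fun s => ?_⟩
  by_contra! hs
  have hN : (N (insert s R)).card = (N R).card + (G.neighborFinset s \ N R).card := by
    rw [add_comm, card_sdiff_add_card]
    simp [N, Finset.biUnion_insert]
  have hgrow := hmax (insert s R) (Finset.mem_filter.mpr ⟨by simp, by
    rw [hN]
    calc (insert s R).card * n ≤ (R.card + 1) * n := Nat.mul_le_mul_right _ (card_insert_le _ _)
      _ ≤ c * ((N R).card + (G.neighborFinset s \ N R).card) := by nlinarith⟩)
  have : (G.neighborFinset s \ N R).card ≠ 0 := fun h0 => by rw [h0] at hs; omega
  omega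

noncomputable def Subgraph.attachingNeighborFinset (H : G.Subgraph) (s : V) : Finset V :=
  {x ∈ G.neighborFinset s | x ∉ H.verts ∧ ∃ t ∈ H.verts, G.Adj x t}

theorem Subgraph.mem_attachingNeighborFinset {H : G.Subgraph} {s x : V} :
    x ∈ H.attachingNeighborFinset s ↔
      G.Adj s x ∧ x ∉ H.verts ∧ ∃ t ∈ H.verts, G.Adj x t := by
  simp [attachingNeighborFinset]

theorem degree_le_card_attachingNeighborFinset_add (H : G.Subgraph) {R : Finset V}
    (hR : ↑R ⊆ H.verts) (s : V) :
    G.degree s ≤ #(H.attachingNeighborFinset s) +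
      #(G.neighborFinset s \ R.biUnion (fun r => G.neighborFinset r)) + H.verts.ncard := by
  rw [← card_neighborFinset_eq_degree, Set.ncard_eq_toFinset_card']
  refine (card_le_card fun x hx => ?_).trans
    ((card_union_le _ _).trans (Nat.add_le_add_right (card_union_le _ _) _))
  by_cases hxH : x ∈ H.verts
  · simp [hxH]
  by_cases hxR : ∃ r ∈ R, G.Adj r x
  · obtain ⟨r, hr, hrx⟩ := hxR
    simp only [mem_union, Subgraph.mem_attachingNeighborFinset]
    exact Or.inl (Or.inl ⟨(mem_neighborFinset _ _ _).mp hx, hxH, r, hR hr, hrx.symm⟩)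
  · simp only [mem_union, mem_sdiff, mem_biUnion, mem_neighborFinset]
    exact Or.inl (Or.inr ⟨(mem_neighborFinset _ _ _).mp hx, hxR⟩)

theorem card_lt_two_mul_card_attachingNeighborFinset_add (H : G.Subgraph) {R : Finset V}
    (hR : ↑R ⊆ H.verts) {q : ℕ} (hq : ∀ v, Fintype.card V ≤ q * G.degree v)
    (hRs : ∀ s, 2 * q * #(G.neighborFinset s \ R.biUnion (fun r => G.neighborFinset r)) <
      Fintype.card V) (s : V) :
    Fintype.card V < 2 * q * (#(H.attachingNeighborFinset s) + H.verts.ncard) := by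
  have := Nat.mul_le_mul_left (2 * q) (degree_le_card_attachingNeighborFinset_add H hR s)
  have := hq s
  have := hRs s
  nlinarith

end Fintype

section CoreColoring

variable {p : ℕ} (H : G.Subgraph) (lab : V → Fin p)

/-- Edges are coloured by the unordered pair of the names of their ends (`coreColoring`): a vertex
of the core `H` is named by itself, any other vertex only by its label. -/
noncomputable def coreName (v : V) : H.verts ⊕ Fin p :=
  if h : v ∈ H.verts then .inl ⟨v, h⟩ else .inr (lab v)

noncomputable def coreColoring : Sym2 V → Sym2 (H.verts ⊕ Fin p) := Sym2.map (coreName H lab)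

variable {H lab}

theorem coreName_of_mem {v : V} (hv : v ∈ H.verts) : coreName H lab v = .inl ⟨v, hv⟩ := by
  simp [coreName, hv]

theorem coreName_of_notMem {v : V} (hv : v ∉ H.verts) : coreName H lab v = .inr (lab v) := by
  simp [coreName, hv]

theorem coreColoring_injOn_edgeSet : Set.InjOn (coreColoring H lab) H.edgeSet := by
  intro e he e' he' h
  induction e using Sym2.ind with | _ a b => ?_
  induction e' using Sym2.ind with | _ a' b' => ?_
  simp only [coreColoring, Sym2.map_mk, coreName_of_mem (H.edge_vert he),
    coreName_of_mem (H.edge_vert (Subgraph.adj_symm _ he)), coreName_of_mem (H.edge_vert he'),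
    coreName_of_mem (H.edge_vert (Subgraph.adj_symm _ he'))] at h
  simpa [Sym2.eq_iff] using h

theorem exists_notMem_of_inr_mem_coreColoring {i : Fin p} {e : Sym2 V}
    (h : .inr i ∈ coreColoring H lab e) : ∃ y ∈ e, y ∉ H.verts ∧ lab y = i := by
  obtain ⟨y, hy, hyi⟩ := Sym2.mem_map.mp h
  by_cases hyH : y ∈ H.verts
  · simp [coreName_of_mem hyH] at hyi
  · exact ⟨y, hy, hyH, by simpa [coreName_of_notMem hyH] using hyi⟩

theorem coreColoring_injOn_sup_path {T : G.Subgraph}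
    (hinj : Set.InjOn (coreColoring H lab) T.edgeSet) {s x t : V} (hsx : G.Adj s x)
    (hxt : G.Adj x t) (hs : s ∉ H.verts) (hx : x ∉ H.verts) (ht : t ∈ H.verts)
    (hfresh : ∀ y ∈ T.verts, y ∉ H.verts → lab y ≠ lab x) :
    Set.InjOn (coreColoring H lab) (T ⊔ G.subgraphOfAdj hxt ⊔ G.subgraphOfAdj hsx).edgeSet := by
  have hxs : coreColoring H lab s(s, x) = s(.inr (lab s), .inr (lab x)) := by
    simp [coreColoring, coreName_of_notMem hs, coreName_of_notMem hx]
  have hxt' : coreColoring H lab s(x, t) = s(.inr (lab x), .inl ⟨t, ht⟩) := by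
    simp [coreColoring, coreName_of_notMem hx, coreName_of_mem ht]
  have hold : ∀ e ∈ T.edgeSet, .inr (lab x) ∉ coreColoring H lab e := fun e he hmem => by
    obtain ⟨y, hy, hyH, hyx⟩ := exists_notMem_of_inr_mem_coreColoring hmem
    exact hfresh y (T.mem_verts_of_mem_edge he hy) hyH hyx
  have hxt_new : coreColoring H lab s(x, t) ∉ coreColoring H lab '' T.edgeSet := by
    rintro ⟨e, he, hce⟩
    exact hold e he (by simp [hce, hxt'])
  have hsx_new : coreColoring H lab s(s, x) ∉ coreColoring H lab '' insert s(x, t) T.edgeSet := by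
    rintro ⟨e, he | he, hce⟩
    · subst he
      simp [hxs, hxt'] at hce
    · exact hold e he (by simp [hce, hxs])
  rw [Subgraph.edgeSet_sup, Subgraph.edgeSet_sup, edgeSet_subgraphOfAdj, edgeSet_subgraphOfAdj,
    Set.union_singleton, Set.union_singleton,
    Set.injOn_insert fun h => hsx_new (Set.mem_image_of_mem _ h),
    Set.injOn_insert fun h => hxt_new (Set.mem_image_of_mem _ h)]
  exact ⟨⟨hinj, hxt_new⟩, hsx_new⟩

section Fintype

variable [Fintype V] {m : ℕ}

theorem card_filter_exists_lab_eq_le (hlab : ∀ i, #{v | lab v = i} ≤ m) (Y : Finset V) :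
    #{x | ∃ y ∈ Y, lab y = lab x} ≤ Y.card * m := by
  refine (card_le_card fun x hx => ?_).trans
    (card_biUnion_le_card_mul Y (fun y => {v | lab v = lab y}) m fun y _ => hlab _)
  obtain ⟨y, hy, hyx⟩ := (mem_filter.mp hx).2
  exact mem_biUnion.mpr ⟨y, hy, by simp [hyx]⟩

theorem exists_fresh_attaching_neighbor (hlab : ∀ i, #{v | lab v = i} ≤ m) {T : G.Subgraph}
    {k : ℕ} (hT : (T.verts \ H.verts).ncard ≤ 2 * k) {s : V}
    (hs : 2 * k * m < #(H.attachingNeighborFinset s)) :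
    ∃ x t, G.Adj s x ∧ G.Adj x t ∧ x ∉ H.verts ∧ t ∈ H.verts ∧
      ∀ y ∈ T.verts, y ∉ H.verts → lab y ≠ lab x := by
  set Y := (T.verts \ H.verts).toFinset
  have hbad := card_filter_exists_lab_eq_le hlab Y
  have hY : Y.card * m ≤ 2 * k * m := by
    gcongr
    rwa [← Set.ncard_eq_toFinset_card']
  obtain ⟨x, hxA, hxbad⟩ := exists_mem_notMem_of_card_lt_card (hbad.trans hY |>.trans_lt hs)
  obtain ⟨hsx, hxH, t, ht, hxt⟩ := Subgraph.mem_attachingNeighborFinset.mp hxA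
  refine ⟨x, t, hsx, hxt, hxH, ht, fun y hy hyH hyx => hxbad ?_⟩
  simp only [mem_filter, mem_univ, true_and]
  exact ⟨y, by simp [Y, hy, hyH], hyx⟩

theorem exists_rainbow_subgraph (hH : H.Connected) (hlab : ∀ i, #{v | lab v = i} ≤ m) {k : ℕ}
    (hgood : ∀ s ∉ H.verts, 2 * k * m < #(H.attachingNeighborFinset s))
    (S : Finset V) (hS : S.card ≤ k) :
    ∃ T : G.Subgraph, T.Connected ∧ H ≤ T ∧ ↑S ⊆ T.verts ∧
      Set.InjOn (coreColoring H lab) T.edgeSet ∧ (T.verts \ H.verts).ncard ≤ 2 * S.card := by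
  induction S using Finset.induction_on with
  | empty => exact ⟨H, hH, le_rfl, by simp, coreColoring_injOn_edgeSet, by simp⟩
  | insert s S hsS ih =>
    rw [card_insert_of_notMem hsS] at hS ⊢
    obtain ⟨T, hT, hHT, hST, hinj, hcard⟩ := ih (by omega)
    by_cases hsT : s ∈ T.verts
    · exact ⟨T, hT, hHT, by simp [Set.insert_subset_iff, hsT, hST], hinj, by omega⟩
    have hsH : s ∉ H.verts := fun h => hsT (hHT.1 h)
    obtain ⟨x, t, hsx, hxt, hxH, htH, hfresh⟩ :=
      exists_fresh_attaching_neighbor hlab (hcard.trans (by omega)) (hgood s hsH)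
    refine ⟨T ⊔ G.subgraphOfAdj hxt ⊔ G.subgraphOfAdj hsx, ?_, hHT.trans (le_sup_left.trans
      le_sup_left), ?_, coreColoring_injOn_sup_path hinj hsx hxt hsH hxH htH hfresh, ?_⟩
    · have hTt := Subgraph.connected_sup hT.preconnected
        (Subgraph.subgraphOfAdj_connected hxt).preconnected ⟨t, hHT.1 htH, by simp⟩
      exact Subgraph.connected_sup hTt.preconnected
        (Subgraph.subgraphOfAdj_connected hsx).preconnected ⟨x, by simp, by simp⟩
    · simp only [coe_insert, Subgraph.verts_sup, subgraphOfAdj_verts]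
      exact Set.insert_subset (by simp) (hST.trans (by intro v; simp +contextual))
    · have hsub : (T ⊔ G.subgraphOfAdj hxt ⊔ G.subgraphOfAdj hsx).verts \ H.verts ⊆
          insert s (insert x (T.verts \ H.verts)) := by
        intro v
        simp only [Subgraph.verts_sup, subgraphOfAdj_verts]
        grind
      calc _ ≤ (insert s (insert x (T.verts \ H.verts))).ncard :=
            Set.ncard_le_ncard hsub (Set.toFinite _)
        _ ≤ (T.verts \ H.verts).ncard + 2 :=
            (Set.ncard_insert_le _ _).trans (by grind [Set.ncard_insert_le])
        _ ≤ 2 * (S.card + 1) := by omega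

theorem rxk_le_choose_of_forall_lt_card_attachingNeighborFinset (hH : H.Connected)
    (hlab : ∀ i, #{v | lab v = i} ≤ m) {k : ℕ}
    (hgood : ∀ s ∉ H.verts, 2 * k * m < #(H.attachingNeighborFinset s)) :
    rxk G k ≤ (H.verts.ncard + p + 1).choose 2 :=
  calc rxk G k ≤ Fintype.card (Sym2 (H.verts ⊕ Fin p)) :=
        rxk_le_card (coreColoring H lab) fun S hS =>
          (exists_rainbow_subgraph hH hlab hgood S hS.le).imp fun _ ⟨hT, _, hST, hinj, _⟩ =>
            ⟨hT, hST, hinj⟩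
    _ = _ := by
        rw [Sym2.card, Fintype.card_sum, Fintype.card_fin, Set.ncard_eq_toFinset_card',
          Set.toFinset_card]

end Fintype

end CoreColoring

theorem rxk_le_choose_of_card_le_mul_degree [Fintype V] (hconn : G.Connected) {q k : ℕ}
    (hq : ∀ v, Fintype.card V ≤ q * G.degree v)
    (hV : 8 * q * k + 4 * q * (1 + 2 * q * (3 * q + 1)) < Fintype.card V) :
    rxk G k ≤ (1 + 2 * q * (3 * q + 1) + 8 * q * (k + 1) + 1).choose 2 := by
  set n := Fintype.card V
  set p := 8 * q * (k + 1)
  obtain ⟨v₀⟩ := hconn.nonempty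
  have hq₀ : 0 < q := Nat.pos_of_ne_zero fun h => by simpa [h] using (hq v₀).trans_lt' hV
  have : NeZero p := ⟨by positivity⟩
  obtain ⟨R, hRc, hR⟩ := exists_card_le_forall_mul_card_neighborFinset_sdiff_lt (G := G) (2 * q)
  obtain ⟨H, hH, -, hRH, hHc⟩ := exists_connected_subgraph_of_dist_le hconn v₀ R
    fun r _ => (hconn.dist_lt_three_mul hq r v₀).le
  have hHβ : H.verts.ncard ≤ 1 + 2 * q * (3 * q + 1) :=
    hHc.trans (Nat.add_le_add_left (Nat.mul_le_mul_right _ hRc) 1)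
  obtain ⟨lab, hlab⟩ := Fintype.exists_fiber_card_le V p
  have hfib : 8 * q * k * (n / p) ≤ n :=
    (Nat.mul_le_mul_right _ (Nat.mul_le_mul_left _ k.le_succ)).trans (Nat.mul_div_le n p)
  refine (rxk_le_choose_of_forall_lt_card_attachingNeighborFinset hH hlab fun s _ => ?_).trans
    (Nat.choose_le_choose _ (by omega))
  have hs := card_lt_two_mul_card_attachingNeighborFinset_add H hRH hq hR s
  -- with `A = H.attachingNeighborFinset s`: `4q·#A > 2n - 4q·#H ≥ n + 8qk ≥ 4q·2k(n/p + 1)`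
  refine Nat.lt_of_mul_lt_mul_left (a := 4 * q) ?_
  nlinarith

end SimpleGraph

theorem stmt15_general (ε : ℝ) (hε : 0 < ε) (k : ℕ) :
    ∃ C : ℕ, ∀ (n : ℕ) (G : SimpleGraph (Fin n)), G.Connected →
      (∀ v, ε * n ≤ ((G.neighborSet v).ncard : ℝ)) →
      rxk G k ≤ C := by
  classical
  set q := ⌈ε⁻¹⌉₊
  set N := 8 * q * k + 4 * q * (1 + 2 * q * (3 * q + 1))
  refine ⟨(N + 1).choose 2 + (1 + 2 * q * (3 * q + 1) + 8 * q * (k + 1) + 1).choose 2,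
    fun n G hconn hdeg => ?_⟩
  rcases le_or_gt n N with hn | hn
  · calc rxk G k ≤ (n + 1).choose 2 := by simpa using rxk_le_choose hconn k
      _ ≤ (N + 1).choose 2 := Nat.choose_le_choose _ (by omega)
      _ ≤ _ := Nat.le_add_right _ _
  have hq : ∀ v, Fintype.card (Fin n) ≤ q * G.degree v := fun v => by
    have h := (le_inv_mul_iff₀ hε).mpr (hdeg v)
    rw [Fintype.card_fin, ← card_neighborSet_eq_degree, ← Nat.card_eq_fintype_card,
      Nat.card_coe_set_eq]
    exact_mod_cast h.trans (mul_le_mul_of_nonneg_right (Nat.le_ceil _) (by positivity))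
  exact (rxk_le_choose_of_card_le_mul_degree hconn hq (by simpa using hn)).trans
    (Nat.le_add_left _ _)

theorem stmt15 (ε : ℝ) (hε : 0 < ε) (k : ℕ) (hk : 1 ≤ k) :
    ∃ C : ℕ, ∀ (n : ℕ) (G : SimpleGraph (Fin n)), G.Connected →
      (∀ v, ε * n ≤ ((G.neighborSet v).ncard : ℝ)) →
      rxk G k ≤ C :=
  stmt15_general ε hε k
end

section
/- Let k and δ be positive integers with k < √(ln δ), and let G be a connected graph on n vertices with minimum degree at least δ. Then rx_k(G) ≤ n·(ln δ/δ)·(1 + o_δ(1)); concretely, rx_k(G) ≤ γ_k^c(G) + k - 1 where γ_k^c(G) ≤ n·(ln δ/δ)·(1 + o_δ(1)). -/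
/-!
Let `D` be a minimum connected `k`-dominating set and give the `|D| - 1` edges of a spanning tree
of `G[D]` distinct colours. Every vertex `v ∉ D` has `k` chosen neighbours in `D`; the edge to the
`i`-th one gets the extra colour `|D| - 1 + i`. Given `k` vertices, number those outside `D`
injectively by `i < k` and hang each on the tree by its `i`-th edge: this is a rainbow tree, so
`rx_k(G) ≤ γ_k^c(G) + k - 1`. Finally `k < √(ln δ) ≤ n (ln δ / δ) / √(ln δ)`, so the additive `k`
is absorbed into the error term, as `1 / √(ln δ) → 0`.
-/

open SimpleGraph Filter

/-- `D` is a connected `k`-dominating set of `G`. -/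
def IsConnKDom {V : Type*} (G : SimpleGraph V) (k : ℕ) (D : Finset V) : Prop :=
  (G.induce (↑D : Set V)).Connected ∧
    ∀ v : V, v ∉ D → k ≤ ((↑D : Set V) ∩ G.neighborSet v).ncard

/-- The connected `k`-domination number. -/
noncomputable def gammakc {V : Type*} (G : SimpleGraph V) (k : ℕ) : ℕ :=
  sInf {m | ∃ D : Finset V, D.card = m ∧ IsConnKDom G k D}

open Function

lemma Set.exists_injective_fin_of_le_ncard {α : Type*} {s : Set α} {k : ℕ} (hk : k ≤ s.ncard) :
    ∃ f : Fin k → α, Injective f ∧ ∀ i, f i ∈ s := by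
  rcases k.eq_zero_or_pos with rfl | hk₀
  · exact ⟨Fin.elim0, fun i => i.elim0, fun i => i.elim0⟩
  have := (Set.finite_of_ncard_pos (hk₀.trans_le hk)).fintype
  obtain ⟨f⟩ : Nonempty (Fin k ↪ s) := Embedding.nonempty_of_card_le (by simpa using hk)
  exact ⟨(↑) ∘ f, Subtype.val_injective.comp f.injective, fun i => (f i).2⟩

lemma Set.Finite.exists_injOn_lt_ncard {α : Type*} {s : Set α} (hs : s.Finite) :
    ∃ f : α → ℕ, Set.InjOn f s ∧ ∀ x ∈ s, f x < s.ncard := by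
  classical
  have := hs.fintype
  let e := Fintype.equivFin s
  refine ⟨fun x => if h : x ∈ s then e ⟨x, h⟩ else 0, fun x hx y hy hxy => ?_, fun x hx => ?_⟩
  · simpa [hx, hy, Fin.val_inj] using hxy
  · simpa [hx] using (e ⟨x, hx⟩).isLt

namespace SimpleGraph

variable {V : Type*} {G : SimpleGraph V}

lemma exists_connected_subgraph_ncard_edgeSet_add_one {D : Finset V}
    (hD : (G.induce (D : Set V)).Connected) :
    ∃ H : G.Subgraph, H.verts = D ∧ H.Connected ∧ H.edgeSet.Finite ∧
      H.edgeSet.ncard + 1 = D.card := by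
  classical
  obtain ⟨T, hle, hT⟩ := (Subgraph.connected_iff'.1 (connected_induce_iff.1 hD)).exists_isTree_le
  have : Fintype ((⊤ : G.Subgraph).induce (D : Set V)).verts := D.finite_toSet.fintype
  have hedge : (Subgraph.coeSubgraph (toSubgraph T hle)).edgeSet =
      Sym2.map Subtype.val '' T.edgeSet := Subgraph.edgeSet_map _ _
  refine ⟨Subgraph.coeSubgraph (toSubgraph T hle), by simp,
    (hT.connected.toSubgraph hle).coeSubgraph, hedge ▸ (Set.toFinite _).image _, ?_⟩
  rw [hedge, Set.ncard_image_of_injective _ (Sym2.map.injective Subtype.val_injective),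
    ← coe_edgeFinset, Set.ncard_coe_finset, hT.card_edgeFinset]
  simp

lemma Subgraph.Connected.sup_of_forall_adj {H K : G.Subgraph} (hH : H.Connected)
    (hK : ∀ v ∈ K.verts, v ∉ H.verts → ∃ u ∈ H.verts, K.Adj v u) : (H ⊔ K).Connected := by
  obtain ⟨u, hu⟩ := hH.nonempty
  have hreach : ∀ w (hw : w ∈ H.verts),
      (H ⊔ K).coe.Reachable ⟨u, Or.inl hu⟩ ⟨w, Or.inl hw⟩ := fun w hw =>
    (hH.preconnected ⟨u, hu⟩ ⟨w, hw⟩).map (Subgraph.inclusion le_sup_left)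
  rw [Subgraph.connected_iff', connected_iff_exists_forall_reachable]
  refine ⟨⟨u, Or.inl hu⟩, fun ⟨v, hv⟩ => ?_⟩
  by_cases hvH : v ∈ H.verts
  · exact hreach v hvH
  · obtain ⟨w, hw, hvw⟩ := hK v (hv.resolve_left hvH) hvH
    exact (hreach w hw).trans (Adj.reachable (Or.inr hvw.symm : (H ⊔ K).Adj w v))

variable {k : ℕ}

lemma isKRainbowColoring_of_connected_subgraph {H : G.Subgraph} (hH : H.Connected)
    {c : Sym2 V → ℕ} {m : ℕ} (hc : Set.InjOn c H.edgeSet) (hcm : ∀ e ∈ H.edgeSet, c e < m)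
    (N : V → Fin k → V) (hN : ∀ v ∉ H.verts, ∀ i, N v i ∈ H.verts ∧ G.Adj v (N v i))
    (hcN : ∀ v ∉ H.verts, ∀ i, c s(v, N v i) = m + i) : IsKRainbowColoring G k c := by
  intro S hS
  let idx : S ≃ Fin k := S.equivFin.trans (finCongr hS)
  let K : G.Subgraph :=
    ⨆ (w : S) (hw : (w : V) ∉ H.verts), G.subgraphOfAdj (hN w hw (idx w)).2
  have hcK : ∀ e ∈ K.edgeSet, ∃ w : S, e = s((w : V), N w (idx w)) ∧ c e = m + idx w := by
    intro e he
    obtain ⟨w, hw, rfl⟩ : ∃ w : S, ∃ _ : (w : V) ∉ H.verts, e = s((w : V), N w (idx w)) := by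
      simpa [K, Subgraph.edgeSet_iSup] using he
    exact ⟨w, rfl, hcN w hw _⟩
  refine ⟨H ⊔ K, hH.sup_of_forall_adj ?_, fun x hx => ?_, ?_⟩
  · intro v hv hvH
    simp only [K, Subgraph.verts_iSup, Set.mem_iUnion, subgraphOfAdj_verts,
      Set.mem_insert_iff, Set.mem_singleton_iff] at hv
    obtain ⟨w, hw, rfl | rfl⟩ := hv
    · exact ⟨_, (hN w hw (idx w)).1, by simpa [K, Subgraph.iSup_adj] using ⟨w, hw, by simp⟩⟩
    · exact absurd (hN w hw (idx w)).1 hvH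
  · by_cases hxH : x ∈ H.verts
    · exact Or.inl hxH
    · refine Or.inr ?_
      simp only [K, Subgraph.verts_iSup, Set.mem_iUnion]
      exact ⟨⟨x, hx⟩, hxH, by simp⟩
  · rw [Subgraph.edgeSet_sup]
    have hdisj : Disjoint H.edgeSet K.edgeSet := Set.disjoint_left.2 fun e heH heK => by
      obtain ⟨w, -, hce⟩ := hcK e heK
      have := hcm e heH
      omega
    refine (Set.injOn_union hdisj).2 ⟨hc, ?_, fun e heH e' heK hce => ?_⟩
    · intro e he e' he' hce
      obtain ⟨w, rfl, hw⟩ := hcK e he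
      obtain ⟨w', rfl, hw'⟩ := hcK e' he'
      obtain rfl : w = w' := idx.injective (Fin.ext (by omega))
      rfl
    · obtain ⟨w, -, hw⟩ := hcK e' heK
      have := hcm e heH
      omega

lemma exists_label_sym2_mk_eq {s : Set V} (hk : 0 < k) (N : V → Fin k → V)
    (hN : ∀ v ∉ s, Injective (N v) ∧ ∀ i, N v i ∈ s) :
    ∃ ℓ : Sym2 V → ℕ, (∀ e, ℓ e < k) ∧ ∀ v ∉ s, ∀ i, ℓ s(v, N v i) = i := by
  classical
  let f : {v // v ∉ s} × Fin k → Sym2 V := fun p => s((p.1 : V), N p.1 p.2)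
  -- an edge `s(v, N v i)` has exactly one endpoint outside `s`, which recovers `v` and then `i`
  have hf : Injective f := by
    rintro ⟨⟨v, hv⟩, i⟩ ⟨⟨w, hw⟩, j⟩ h
    rcases Sym2.eq_iff.1 h with ⟨hvw, hij⟩ | ⟨hvw, -⟩
    · obtain rfl : v = w := hvw
      obtain rfl := (hN v hv).1 hij
      rfl
    · exact absurd ((show v = N w j from hvw) ▸ (hN w hw).2 j) hv
  refine ⟨extend f (fun p => p.2) (fun _ => 0), fun e => ?_,
    fun v hv i => hf.extend_apply _ _ (⟨v, hv⟩, i)⟩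
  rw [extend_def]
  split_ifs
  exacts [Fin.is_lt _, hk]

lemma rxk_le_add_of_connected_subgraph (hk : 0 < k) {H : G.Subgraph} (hH : H.Connected)
    (hdom : ∀ v ∉ H.verts, k ≤ (H.verts ∩ G.neighborSet v).ncard)
    {c₀ : Sym2 V → ℕ} {m : ℕ} (hc₀ : Set.InjOn c₀ H.edgeSet) (hc₀m : ∀ e ∈ H.edgeSet, c₀ e < m) :
    rxk G k ≤ m + k := by
  classical
  have hNex : ∀ v, ∃ Nv : Fin k → V, v ∉ H.verts →
      Injective Nv ∧ ∀ i, Nv i ∈ H.verts ∧ G.Adj v (Nv i) := by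
    intro v
    by_cases hv : v ∈ H.verts
    · exact ⟨fun _ => v, fun h => absurd hv h⟩
    · obtain ⟨Nv, hinj, hmem⟩ := Set.exists_injective_fin_of_le_ncard (hdom v hv)
      exact ⟨Nv, fun _ => ⟨hinj, hmem⟩⟩
  choose N hN using hNex
  obtain ⟨ℓ, hℓk, hℓ⟩ :=
    exists_label_sym2_mk_eq hk N fun v hv => ⟨(hN v hv).1, fun i => ((hN v hv).2 i).1⟩
  let c : Sym2 V → ℕ := fun e => if e ∈ H.edgeSet then c₀ e else m + ℓ e
  have hcN : ∀ v ∉ H.verts, ∀ i, c s(v, N v i) = m + i := by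
    intro v hv i
    have hnot : s(v, N v i) ∉ H.edgeSet := fun he =>
      hv (H.mem_verts_of_mem_edge he (Sym2.mem_mk_left _ _))
    simp only [c, if_neg hnot, hℓ v hv i]
  refine Nat.sInf_le ⟨c, fun e _ => ?_, isKRainbowColoring_of_connected_subgraph hH
    (hc₀.congr fun e he => (if_pos he).symm)
    (fun e he => by simp only [c, if_pos he]; exact hc₀m e he) N (fun v hv => (hN v hv).2) hcN⟩
  simp only [c]
  split_ifs with he
  · exact (hc₀m e he).trans_le (Nat.le_add_right m k)
  · exact Nat.add_lt_add_left (hℓk e) m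

lemma rxk_le_card_add_sub_one_of_isConnKDom (hk : 0 < k) {D : Finset V}
    (hD : IsConnKDom G k D) : rxk G k ≤ D.card + k - 1 := by
  obtain ⟨H, hHD, hH, hfin, hcard⟩ := exists_connected_subgraph_ncard_edgeSet_add_one hD.1
  obtain ⟨c₀, hc₀, hc₀m⟩ := hfin.exists_injOn_lt_ncard
  have := rxk_le_add_of_connected_subgraph hk hH (hHD ▸ fun v hv => hD.2 v hv) hc₀ hc₀m
  omega

theorem rxk_le_gammakc_add_sub_one [Finite V] (hG : G.Connected) (hk : 0 < k) :
    rxk G k ≤ gammakc G k + k - 1 := by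
  have := Fintype.ofFinite V
  have hne : {m | ∃ D : Finset V, D.card = m ∧ IsConnKDom G k D}.Nonempty := by
    refine ⟨_, Finset.univ, rfl, ?_, fun v hv => absurd (Finset.mem_univ v) hv⟩
    rw [Finset.coe_univ]
    exact G.induceUnivIso.connected_iff.2 hG
  obtain ⟨D, hD, hDconn⟩ := Nat.sInf_mem hne
  rw [gammakc, ← hD]
  exact rxk_le_card_add_sub_one_of_isConnKDom hk hDconn

end SimpleGraph

open Real in
lemma tendsto_inv_sqrt_log_natCast : Tendsto (fun δ : ℕ => (√(log δ))⁻¹) atTop (nhds 0) :=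
  tendsto_inv_atTop_zero.comp
    (tendsto_sqrt_atTop.comp (tendsto_log_atTop.comp tendsto_natCast_atTop_atTop))

open Real in
lemma natCast_le_mul_log_div_mul_inv_sqrt {k δ : ℕ} {n : ℝ} (hk : (k : ℝ) < √(log δ))
    (hδn : δ ≤ n) : (k : ℝ) ≤ n * (log δ / δ) * (√(log δ))⁻¹ := by
  have hL : 0 < √(log δ) := (Nat.cast_nonneg k).trans_lt hk
  have hδ : (0 : ℝ) < δ := by
    rcases Nat.eq_zero_or_pos δ with rfl | hδ
    · simp at hL
    · exact_mod_cast hδ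
  calc (k : ℝ) ≤ √(log δ) := hk.le
    _ = δ * (log δ / δ) * (√(log δ))⁻¹ := by
      rw [mul_div_cancel₀ _ hδ.ne', ← div_eq_mul_inv, div_sqrt]
    _ ≤ n * (log δ / δ) * (√(log δ))⁻¹ := by gcongr

/-- Assuming the Caro–West–Yuster bound `γ_k^c(G) ≤ n (ln δ / δ)(1 + o_δ(1))` for
`k < √(ln δ)`, one gets `rx_k(G) ≤ n (ln δ / δ)(1 + o_δ(1))`. -/
theorem stmt17
    (g : ℕ → ℝ) (hg : Tendsto g atTop (nhds 0))
    (hCWY : ∀ (k δ : ℕ), 0 < k → 0 < δ → (k : ℝ) < Real.sqrt (Real.log δ) →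
      ∀ (n : ℕ) (G : SimpleGraph (Fin n)), G.Connected →
      (∀ v, δ ≤ (G.neighborSet v).ncard) →
      (gammakc G k : ℝ) ≤ n * (Real.log δ / δ) * (1 + g δ)) :
    ∃ f : ℕ → ℝ, Tendsto f atTop (nhds 0) ∧
      ∀ (k δ : ℕ), 0 < k → 0 < δ → (k : ℝ) < Real.sqrt (Real.log δ) →
      ∀ (n : ℕ) (G : SimpleGraph (Fin n)), G.Connected →
      (∀ v, δ ≤ (G.neighborSet v).ncard) →
      (rxk G k : ℝ) ≤ n * (Real.log δ / δ) * (1 + f δ) := by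
  refine ⟨fun δ => g δ + (Real.sqrt (Real.log δ))⁻¹,
    by simpa using hg.add tendsto_inv_sqrt_log_natCast, ?_⟩
  intro k δ hk hδ hkδ n G hG hmin
  obtain ⟨v⟩ := hG.nonempty
  have hδn : (δ : ℝ) ≤ n := by
    exact_mod_cast (hmin v).trans ((G.neighborSet v).ncard_le_card.trans_eq (Nat.card_fin n))
  have hrx : (rxk G k : ℝ) ≤ gammakc G k + k := by
    exact_mod_cast (rxk_le_gammakc_add_sub_one hG hk).trans (Nat.sub_le _ _)
  calc (rxk G k : ℝ) ≤ gammakc G k + k := hrx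
    _ ≤ n * (Real.log δ / δ) * (1 + g δ) +
        n * (Real.log δ / δ) * (Real.sqrt (Real.log δ))⁻¹ :=
      add_le_add (hCWY k δ hk hδ hkδ n G hG hmin) (natCast_le_mul_log_div_mul_inv_sqrt hkδ hδn)
    _ = n * (Real.log δ / δ) * (1 + (g δ + (Real.sqrt (Real.log δ))⁻¹)) := by ring
end
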